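/- arXiv:1907.09687 — 2 statements merged into one kernel-verified Lean document; each statement's English description precedes it below -/
import Mathlib

section
/- Let (X,B,b) be a coarse proximity space. For unbounded A, B ⊆ X: A φ B if and only if A' = B', where A' and B' are the traces of A and B in the boundary UX. -/
open Set

universe u
variable {X : Type u}

/-- The axioms of a coarse proximity structure: a bornology `B` (contains singletons,
closed under subsets and finite unions) and a relation `b` satisfying symmetry,
unboundedness of related sets, relatedness of sets with unbounded intersection,
the union axiom, and the strong axiom. -/
structure IsCoarseProximity (B : Set (Set X)) (b : Set X → Set X → Prop) : Prop where
  singleton_mem : ∀ x : X, {x} ∈ B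
  subset_mem : ∀ A C : Set X, A ∈ B → C ⊆ A → C ∈ B
  union_mem : ∀ A C : Set X, A ∈ B → C ∈ B → A ∪ C ∈ B
  symm : ∀ A C : Set X, b A C → b C A
  unbounded_of_rel : ∀ A C : Set X, b A C → A ∉ B ∧ C ∉ B
  rel_of_inter : ∀ A C : Set X, A ∩ C ∉ B → b A C
  union_iff : ∀ A C D : Set X, b (A ∪ C) D ↔ b A D ∨ b C D
  strong : ∀ A C : Set X, ¬ b A C → ∃ E : Set X, ¬ b A E ∧ ¬ b (univ \ E) C

/-- A coarse proximity space structure on `X`. -/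
structure CoarseProximity (X : Type u) where
  B : Set (Set X)
  b : Set X → Set X → Prop
  isCP : IsCoarseProximity B b

/-- The weak asymptotic resemblance induced by a coarse proximity. -/
def phi (cp : CoarseProximity X) (A C : Set X) : Prop :=
  (∀ C' ⊆ C, C' ∉ cp.B → cp.b A C') ∧ (∀ A' ⊆ A, A' ∉ cp.B → cp.b A' C)

/-- The discrete extension of the coarse proximity `b`. -/
def deltaExt (cp : CoarseProximity X) (A C : Set X) : Prop :=
  (A ∩ C).Nonempty ∨ cp.b A C

/-- A cluster in the proximity space given by the discrete extension of `b`: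
any two members are close, any set close to all members is a member, and a union
belongs only if one of the pieces does. -/
structure IsCluster (cp : CoarseProximity X) (σ : Set (Set X)) : Prop where
  close : ∀ A ∈ σ, ∀ C ∈ σ, deltaExt cp A C
  mem_of_close : ∀ C : Set X, (∀ A ∈ σ, deltaExt cp C A) → C ∈ σ
  union_cases : ∀ A C : Set X, A ∪ C ∈ σ → A ∈ σ ∨ C ∈ σ

/-- The boundary `𝒰X` of the coarse proximity space: clusters (in the Smirnov
compactification of the discrete extension) containing no bounded set. -/
def UX (cp : CoarseProximity X) : Set (Set (Set X)) :=
  {σ | IsCluster cp σ ∧ ∀ A ∈ σ, A ∉ cp.B}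

/-- The trace `A' = cl_𝔛(A) ∩ 𝒰X` of `A ⊆ X` in the boundary; a cluster of the
boundary lies in the closure of `A` in the Smirnov compactification iff `A` is a
member of the cluster. -/
def trace (cp : CoarseProximity X) (A : Set X) : Set (Set (Set X)) :=
  {σ ∈ UX cp | A ∈ σ}

/-- Relative closure in a subspace `Y` of the Smirnov compactification: a cluster
`σ ∈ Y` lies in the closure of `S ⊆ Y` iff every subset of `X` absorbing `S`
(i.e. belonging to every cluster of `S`) belongs to `σ`. -/
def clRel (Y S : Set (Set (Set X))) : Set (Set (Set X)) :=
  {σ ∈ Y | ∀ C : Set X, (∀ τ ∈ S, C ∈ τ) → C ∈ σ}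

/-- A subset of `Y` is relatively closed iff it contains its relative closure. -/
def relClosed (Y K : Set (Set (Set X))) : Prop :=
  K ⊆ Y ∧ clRel Y K ⊆ K

/-- Interior in the boundary `𝒰X`. -/
def intU (cp : CoarseProximity X) (S : Set (Set (Set X))) : Set (Set (Set X)) :=
  UX cp \ clRel (UX cp) (UX cp \ S)

/-- Closed subsets of the boundary `𝒰X`. -/
def IsClosedU (cp : CoarseProximity X) (K : Set (Set (Set X))) : Prop :=
  relClosed (UX cp) K

/-- Open subsets of the boundary `𝒰X`. -/
def IsOpenU (cp : CoarseProximity X) (U : Set (Set (Set X))) : Prop :=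
  U ⊆ UX cp ∧ IsClosedU cp (UX cp \ U)

/-!
Members of a boundary cluster are pairwise `b`-related, since their bounded overlap can be cut
away. So if `A φ B` and `A ∈ σ ∈ 𝒰X`, every member of `σ` is `b`-related to `A`, hence to `B`
(split `A` along a set witnessing the strong axiom), and `B ∈ σ`. Conversely, if `A` is not
`b`-related to an unbounded `C ⊆ B`, then `C \ A` is unbounded and lies in a boundary cluster,
built from an ultrafilter finer than the cobounded filter on `C \ A`; that cluster contains `B`
but not `A`.
-/

open Filter

namespace CoarseProximity

variable {cp : CoarseProximity X} {A A₁ C C₁ D : Set X} {σ : Set (Set X)}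

theorem rel_mono (h : cp.b A C) (hA : A ⊆ A₁) (hC : C ⊆ C₁) : cp.b A₁ C₁ := by
  have hA₁ : cp.b A₁ C :=
    union_eq_self_of_subset_left hA ▸ (cp.isCP.union_iff A A₁ C).2 (.inl h)
  have hC₁ : cp.b C₁ A₁ :=
    union_eq_self_of_subset_left hC ▸
      (cp.isCP.union_iff C C₁ A₁).2 (.inl (cp.isCP.symm _ _ hA₁))
  exact cp.isCP.symm _ _ hC₁

theorem inter_mem_B_of_not_rel (h : ¬cp.b A C) : A ∩ C ∈ cp.B := by
  by_contra hAC
  exact h (rel_mono (cp.isCP.rel_of_inter _ _ (by rwa [inter_self])) inter_subset_left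
    inter_subset_right)

theorem diff_not_mem_B (hA : A ∉ cp.B) (hAC : A ∩ C ∈ cp.B) : A \ C ∉ cp.B := fun h =>
  hA (cp.isCP.subset_mem _ A (cp.isCP.union_mem _ _ h hAC) (sdiff_union_inter A C).ge)

theorem deltaExt_symm (h : deltaExt cp A C) : deltaExt cp C A :=
  h.imp (fun h => inter_comm A C ▸ h) (cp.isCP.symm _ _)

theorem deltaExt_mono (h : deltaExt cp A C) (hA : A ⊆ A₁) (hC : C ⊆ C₁) :
    deltaExt cp A₁ C₁ :=
  h.imp (Nonempty.mono (inter_subset_inter hA hC)) (rel_mono · hA hC)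

theorem deltaExt_union_left : deltaExt cp (A ∪ C) D ↔ deltaExt cp A D ∨ deltaExt cp C D := by
  simp only [deltaExt, union_inter_distrib_right, union_nonempty, cp.isCP.union_iff]
  tauto

theorem deltaExt_strong (h : ¬deltaExt cp A C) :
    ∃ E : Set X, ¬deltaExt cp A E ∧ ¬deltaExt cp Eᶜ C := by
  have hAC : ¬(A ∩ C).Nonempty := fun hne => h (.inl hne)
  obtain ⟨E₀, hAE₀, hE₀C⟩ := cp.isCP.strong A C fun hb => h (.inr hb)
  -- `E₀` separates `A` from `C` coarsely; adding `C` and removing `A` makes it separate them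
  -- as sets too.
  refine ⟨(E₀ ∪ C) \ A, ?_, ?_⟩
  · rintro (⟨x, hxA, -, hxA'⟩ | hrel)
    · exact hxA' hxA
    · have hAE₀C : cp.b A (E₀ ∪ C) := rel_mono hrel subset_rfl sdiff_subset
      rcases (cp.isCP.union_iff E₀ C A).1 (cp.isCP.symm _ _ hAE₀C) with hrel' | hrel'
      · exact hAE₀ (cp.isCP.symm _ _ hrel')
      · exact h (.inr (cp.isCP.symm _ _ hrel'))
  · rintro (⟨x, hxE, hxC⟩ | hrel)
    · exact hAC ⟨x, not_not.1 (fun hxA => hxE ⟨.inr hxC, hxA⟩), hxC⟩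
    · have hsub : ((E₀ ∪ C) \ A)ᶜ ⊆ (univ \ E₀) ∪ A := fun x hx => by
        by_cases hxA : x ∈ A
        · exact .inr hxA
        · exact .inl ⟨mem_univ x, fun hxE₀ => hx ⟨.inl hxE₀, hxA⟩⟩
      rcases (cp.isCP.union_iff _ _ _).1 (rel_mono hrel hsub subset_rfl) with hrel' | hrel'
      · exact hE₀C hrel'
      · exact h (.inr hrel')

theorem _root_.IsCluster.mem_of_superset (hσ : IsCluster cp σ) (hC : C ∈ σ) (h : C ⊆ C₁) :
    C₁ ∈ σ :=
  hσ.mem_of_close C₁ fun A hA => deltaExt_mono (hσ.close C hC A hA) h subset_rfl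

variable (cp) in
def clusterOf (F : Ultrafilter X) : Set (Set X) :=
  {C | ∀ S ∈ F, deltaExt cp C S}

theorem isCluster_clusterOf (F : Ultrafilter X) : IsCluster cp (clusterOf cp F) where
  close A hA C hC := by
    by_contra hAC
    obtain ⟨E, hAE, hEC⟩ := deltaExt_strong hAC
    rcases F.mem_or_compl_mem E with hE | hE
    · exact hAE (hA E hE)
    · exact hEC (deltaExt_symm (hC _ hE))
  mem_of_close C h S hS := h S fun T hT => .inl (F.nonempty_of_mem (inter_mem hS hT))
  union_cases A C h := by
    by_contra! hAC
    simp only [clusterOf, mem_ofPred_eq, not_forall] at hAC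
    obtain ⟨⟨S, hS, hAS⟩, ⟨T, hT, hCT⟩⟩ := hAC
    rcases deltaExt_union_left.1 (h _ (inter_mem hS hT)) with h' | h'
    · exact hAS (deltaExt_mono h' subset_rfl inter_subset_left)
    · exact hCT (deltaExt_mono h' subset_rfl inter_subset_right)

theorem exists_mem_UX (hA : A ∉ cp.B) : ∃ σ ∈ UX cp, A ∈ σ := by
  rcases isEmpty_or_nonempty X with hX | ⟨⟨x⟩⟩
  · -- no ultrafilters here, but every set equals `A`, so `univ` is a boundary cluster
    refine ⟨univ, ⟨⟨fun C _ D _ => .inr (cp.isCP.rel_of_inter _ _ ?_), fun _ _ => mem_univ _,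
      fun _ _ _ => .inl (mem_univ _)⟩, fun C _ => ?_⟩, mem_univ _⟩ <;>
    convert hA <;> exact Subsingleton.elim _ _
  have hempty : ∅ ∈ cp.B :=
    cp.isCP.subset_mem _ _ (cp.isCP.singleton_mem x) (empty_subset _)
  let cobounded : Filter X := comk (· ∈ cp.B) hempty
    (fun t ht s hs => cp.isCP.subset_mem t s ht hs) (fun s hs t ht => cp.isCP.union_mem s t hs ht)
  have : (cobounded ⊓ 𝓟 A).NeBot := inf_principal_neBot_iff.2 fun U hU => by
    by_contra hUA
    exact hA (cp.isCP.subset_mem _ _ (mem_comk.1 hU) fun y hyA hyU => hUA ⟨y, hyU, hyA⟩)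
  let F := Ultrafilter.of (cobounded ⊓ 𝓟 A)
  refine ⟨clusterOf cp F, ⟨isCluster_clusterOf F, fun D hD hDB => ?_⟩, fun S hS => ?_⟩
  · have hDc : Dᶜ ∈ F :=
      Ultrafilter.of_le _ (mem_inf_of_left (mem_comk.2 ((compl_compl D).symm ▸ hDB)))
    rcases hD _ hDc with ⟨y, hy, hy'⟩ | hrel
    · exact hy' hy
    · exact (cp.isCP.unbounded_of_rel _ _ hrel).1 hDB
  · have hAF : A ∈ F := Ultrafilter.of_le _ (mem_inf_of_right (mem_principal_self A))
    exact .inl (F.nonempty_of_mem (inter_mem hAF hS))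

theorem diff_mem_of_mem_UX (hσ : σ ∈ UX cp) (hA : A ∈ σ) (hAC : A ∩ C ∈ cp.B) :
    A \ C ∈ σ :=
  (hσ.1.union_cases _ _ ((sdiff_union_inter A C).symm ▸ hA)).resolve_right fun h => hσ.2 _ h hAC

theorem rel_of_mem_UX (hσ : σ ∈ UX cp) (hA : A ∈ σ) (hC : C ∈ σ) : cp.b A C := by
  by_contra h
  have hAC := inter_mem_B_of_not_rel h
  rcases hσ.1.close _ (diff_mem_of_mem_UX hσ hA hAC) _
      (diff_mem_of_mem_UX hσ hC (inter_comm A C ▸ hAC)) with ⟨x, hx, hx'⟩ | hrel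
  · exact hx'.2 hx.1
  · exact h (rel_mono hrel sdiff_subset sdiff_subset)

theorem _root_.phi.symm (h : phi cp A C) : phi cp C A :=
  ⟨fun D hD hDB => cp.isCP.symm _ _ (h.2 D hD hDB),
    fun D hD hDB => cp.isCP.symm _ _ (h.1 D hD hDB)⟩

theorem rel_of_phi_of_rel (hφ : phi cp A C) (h : cp.b A D) : cp.b C D := by
  by_contra hCD
  obtain ⟨E, hCE, hED⟩ := cp.isCP.strong C D hCD
  rcases (cp.isCP.union_iff _ _ _).1 ((inter_union_sdiff A E).symm ▸ h) with h' | h'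
  · exact hCE (cp.isCP.symm _ _ (rel_mono (hφ.2 _ inter_subset_left
      (cp.isCP.unbounded_of_rel _ _ h').1) inter_subset_right subset_rfl))
  · exact hED (rel_mono h' (fun x hx => ⟨mem_univ x, hx.2⟩) subset_rfl)

theorem trace_subset_of_phi (h : phi cp A C) : trace cp A ⊆ trace cp C := by
  rintro σ ⟨hσ, hA⟩
  exact ⟨hσ, hσ.1.mem_of_close C fun D hD =>
    .inr (rel_of_phi_of_rel h (rel_of_mem_UX hσ hA hD))⟩

theorem rel_of_trace_subset (h : trace cp C ⊆ trace cp A) (hD : D ⊆ C) (hDB : D ∉ cp.B) :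
    cp.b A D := by
  by_contra hAD
  have hDA : D \ A ∉ cp.B := diff_not_mem_B hDB (inter_comm A D ▸ inter_mem_B_of_not_rel hAD)
  obtain ⟨σ, hσ, hDAσ⟩ := exists_mem_UX hDA
  have hAσ : A ∈ σ := (h ⟨hσ, hσ.1.mem_of_superset hDAσ (sdiff_subset.trans hD)⟩).2
  exact hAD (rel_mono (rel_of_mem_UX hσ hAσ hDAσ) subset_rfl sdiff_subset)

end CoarseProximity

theorem phi_iff_traces_eq_general (cp : CoarseProximity X) (A B : Set X) :
    phi cp A B ↔ trace cp A = trace cp B :=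
  ⟨fun h => (cp.trace_subset_of_phi h).antisymm (cp.trace_subset_of_phi h.symm),
    fun h => ⟨fun _ hC hCB => cp.rel_of_trace_subset h.ge hC hCB,
      fun _ hC hCB => cp.isCP.symm _ _ (cp.rel_of_trace_subset h.le hC hCB)⟩⟩

/-- for unbounded `A, B ⊆ X`, `A φ B` iff `A' = B'` in the
boundary `𝒰X`. -/
theorem phi_iff_traces_eq (cp : CoarseProximity X) (A B : Set X)
    (hA : A ∉ cp.B) (hB : B ∉ cp.B) :
    phi cp A B ↔ trace cp A = trace cp B :=
  phi_iff_traces_eq_general cp A B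
end

section
/- Let (X,B,b) be a coarse proximity space with boundary UX and Smirnov compactification 𝔛. If K, U ⊆ UX with K closed, U open in UX, and K ⊆ U, then there exists C ⊆ X such that K ⊆ int(C') ⊆ C' ⊆ U, where C' = cl_𝔛(C) ∩ UX and int denotes interior in UX. -/
open Set

universe u
variable {X : Type u}

section Aux

variable (cp : CoarseProximity X)

lemma b_mono_left {A A' C : Set X} (h : cp.b A C) (hAA : A ⊆ A') : cp.b A' C := by
  have h2 := (cp.isCP.union_iff A A' C).mpr (Or.inl h)
  rwa [union_eq_self_of_subset_left hAA] at h2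

lemma delta_symm {A C : Set X} (h : deltaExt cp A C) : deltaExt cp C A := by
  rcases h with h | h
  · exact Or.inl (by rwa [inter_comm])
  · exact Or.inr (cp.isCP.symm _ _ h)

lemma delta_mono_left {A A' C : Set X} (h : deltaExt cp A C) (hAA : A ⊆ A') :
    deltaExt cp A' C := by
  rcases h with h | h
  · exact Or.inl (h.mono (inter_subset_inter_left _ hAA))
  · exact Or.inr (b_mono_left cp h hAA)

lemma delta_mono_right {A C C' : Set X} (h : deltaExt cp A C) (hCC : C ⊆ C') :
    deltaExt cp A C' := delta_symm cp (delta_mono_left cp (delta_symm cp h) hCC)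

lemma delta_union_left {A C D : Set X} (h : deltaExt cp (A ∪ C) D) :
    deltaExt cp A D ∨ deltaExt cp C D := by
  rcases h with h | h
  · rw [union_inter_distrib_right] at h
    rcases union_nonempty.mp h with h | h
    · exact Or.inl (Or.inl h)
    · exact Or.inr (Or.inl h)
  · rcases (cp.isCP.union_iff A C D).mp h with h | h
    · exact Or.inl (Or.inr h)
    · exact Or.inr (Or.inr h)

lemma mem_of_superset_cluster {σ : Set (Set X)} (hσ : IsCluster cp σ)
    {A A' : Set X} (hA : A ∈ σ) (h : A ⊆ A') : A' ∈ σ :=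
  hσ.mem_of_close A' fun B hB => delta_mono_left cp (hσ.close A hA B hB) h

lemma univ_mem_cluster {σ : Set (Set X)} (hσ : σ ∈ UX cp) : univ ∈ σ := by
  refine hσ.1.mem_of_close univ fun A hA => Or.inr ?_
  have hA' : A ∉ cp.B := hσ.2 A hA
  have h2 : univ ∩ A ∉ cp.B := by rwa [univ_inter]
  exact cp.isCP.rel_of_inter _ _ h2

lemma compl_mem_cluster {σ : Set (Set X)} (hσ : σ ∈ UX cp) {C : Set X} (hC : C ∉ σ) :
    univ \ C ∈ σ := by
  have huniv : C ∪ univ \ C ∈ σ := by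
    rw [union_diff_cancel (subset_univ C)]; exact univ_mem_cluster cp hσ
  rcases hσ.1.union_cases _ _ huniv with h | h
  · exact absurd h hC
  · exact h

lemma not_mem_of_far {σ : Set (Set X)} (hσ : IsCluster cp σ) {A E : Set X}
    (hA : A ∈ σ) (h : ¬ deltaExt cp A E) : E ∉ σ :=
  fun hE => h (hσ.close A hA E hE)

lemma exists_far_of_not_mem {σ : Set (Set X)} (hσ : IsCluster cp σ) {C : Set X}
    (hC : C ∉ σ) : ∃ A ∈ σ, ¬ deltaExt cp A C := by
  by_contra h
  push_neg at h
  exact hC (hσ.mem_of_close C fun A hA => delta_symm cp (h A hA))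

lemma delta_strong {A C : Set X} (h : ¬ deltaExt cp A C) :
    ∃ E : Set X, ¬ deltaExt cp A E ∧ ¬ deltaExt cp (univ \ E) C := by
  have hAC : ¬ (A ∩ C).Nonempty := fun hx => h (Or.inl hx)
  have hb : ¬ cp.b A C := fun hb => h (Or.inr hb)
  obtain ⟨E₀, hE₀A, hE₀C⟩ := cp.isCP.strong A C hb
  refine ⟨(E₀ ∪ C) \ A, ?_, ?_⟩
  · rintro (⟨x, hx1, hx2⟩ | hb')
    · exact hx2.2 hx1
    · have h1 : cp.b ((E₀ ∪ C) \ A) A := cp.isCP.symm _ _ hb'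
      have h2 : cp.b (E₀ ∪ C) A := b_mono_left cp h1 diff_subset
      rcases (cp.isCP.union_iff E₀ C A).mp h2 with h3 | h3
      · exact hE₀A (cp.isCP.symm _ _ h3)
      · exact hb (cp.isCP.symm _ _ h3)
  · rintro (⟨x, hx1, hx2⟩ | hb')
    · -- x ∈ univ \ ((E₀ ∪ C) \ A) and x ∈ C
      have hxA : x ∈ A := by
        by_contra hxA
        exact hx1.2 ⟨Or.inr hx2, hxA⟩
      exact hAC ⟨x, hxA, hx2⟩
    · have hsub : univ \ ((E₀ ∪ C) \ A) ⊆ (univ \ E₀) ∪ A := by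
        intro x hx
        by_cases hxA : x ∈ A
        · exact Or.inr hxA
        · refine Or.inl ⟨trivial, fun hxE₀ => ?_⟩
          exact hx.2 ⟨Or.inl hxE₀, hxA⟩
      have h2 : cp.b ((univ \ E₀) ∪ A) C := b_mono_left cp hb' hsub
      rcases (cp.isCP.union_iff _ _ _).mp h2 with h3 | h3
      · exact hE₀C h3
      · exact hb h3

lemma mem_of_sUnion_mem {σ : Set (Set X)} (hσ : σ ∈ UX cp) (hne : (∅ : Set X) ∈ cp.B)
    {S : Set (Set X)} (hfin : S.Finite) : ⋃₀ S ∈ σ → ∃ s ∈ S, s ∈ σ := by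
  refine Set.Finite.induction_on (motive := fun S _ => ⋃₀ S ∈ σ → ∃ s ∈ S, s ∈ σ) S hfin ?_ ?_
  · intro h; rw [sUnion_empty] at h; exact absurd hne (hσ.2 ∅ h)
  · intro a S' _ _ ih h
    rw [sUnion_insert] at h
    rcases hσ.1.union_cases _ _ h with h | h
    · exact ⟨a, mem_insert _ _, h⟩
    · obtain ⟨s, hs, hsσ⟩ := ih h
      exact ⟨s, mem_insert_of_mem _ hs, hsσ⟩

lemma intU_trace_subset (C : Set X) : intU cp (trace cp C) ⊆ trace cp C := by
  rintro σ ⟨hσUX, hσn⟩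
  by_contra hσt
  exact hσn ⟨hσUX, fun E hE => hE σ ⟨hσUX, hσt⟩⟩

end Aux

/-- for `K ⊆ U ⊆ 𝒰X` with `K` closed and `U` open in `𝒰X`, there
is `C ⊆ X` with `K ⊆ int(C') ⊆ C' ⊆ U`. -/
theorem exists_trace_between (cp : CoarseProximity X) (K U : Set (Set (Set X)))
    (hK : IsClosedU cp K) (hU : IsOpenU cp U) (hKU : K ⊆ U) :
    ∃ C : Set X, K ⊆ intU cp (trace cp C) ∧ intU cp (trace cp C) ⊆ trace cp C ∧
      trace cp C ⊆ U := by
    classical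
  rcases isEmpty_or_nonempty X with hX | hX
  · -- X is empty
    rcases eq_empty_or_nonempty (UX cp) with hUX | ⟨σ₀, hσ₀⟩
    · refine ⟨∅, ?_, intU_trace_subset cp ∅, ?_⟩
      · intro σ hσ
        exact absurd (hK.1 hσ) (by simp [hUX])
      · intro σ hσ
        exact absurd hσ.1 (by simp [hUX])
    · exfalso
      have hall : ∀ C : Set X, C ∈ σ₀ := by
        intro C
        have hCu : C = univ := by
          ext x; exact (hX.elim x)
        rw [hCu]; exact univ_mem_cluster cp hσ₀
      have h1 : σ₀ ∈ clRel (UX cp) (UX cp \ U) := ⟨hσ₀, fun C _ => hall C⟩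
      have h2 : σ₀ ∈ clRel (UX cp) K := ⟨hσ₀, fun C _ => hall C⟩
      exact (hU.2.2 h1).2 (hKU (hK.2 h2))
  · -- X is nonempty
    obtain ⟨x₀⟩ := hX
    have hempty : (∅ : Set X) ∈ cp.B :=
      cp.isCP.subset_mem {x₀} ∅ (cp.isCP.singleton_mem x₀) (empty_subset _)
    set D : Set (Set (Set X)) := UX cp \ U with hD
    have key : ∃ C : Set X, (∀ τ ∈ D, C ∉ τ) ∧ ∀ σ ∈ K, univ \ C ∉ σ := by
      by_contra hcon
      push_neg at hcon
      -- hcon : ∀ C, (∀ τ ∈ D, C ∉ τ) → ∃ σ ∈ K, univ \ C ∈ σ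
      set Fs : Set (Set X) := {F | ∀ τ ∈ D, univ \ F ∉ τ} with hFs
      set Gs : Set (Set X) := {G | ∀ σ ∈ K, G ∈ σ} with hGs
      set bad : Set (Set X) := {V | ∃ G ∈ Gs, ¬ deltaExt cp V G} with hbad
      set Hs : Set (Set X) := Fs ∪ (fun V => univ \ V) '' bad with hHs
      have hFmem : ∀ F₀ ∈ Fs, ∃ σ ∈ K, F₀ ∈ σ := by
        intro F₀ hF₀
        obtain ⟨σ, hσK, hσm⟩ := hcon (univ \ F₀) hF₀
        rw [diff_diff_cancel_left (subset_univ F₀)] at hσm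
        exact ⟨σ, hσK, hσm⟩
      have hFuniv : (univ : Set X) ∈ Fs := by
        intro τ hτ hm
        rw [diff_self] at hm
        exact hτ.1.2 ∅ hm hempty
      have hFinter : ∀ F₁ ∈ Fs, ∀ F₂ ∈ Fs, F₁ ∩ F₂ ∈ Fs := by
        intro F₁ h₁ F₂ h₂ τ hτ hm
        rw [diff_inter] at hm
        rcases hτ.1.1.union_cases _ _ hm with h | h
        · exact h₁ τ hτ h
        · exact h₂ τ hτ h
      have hFsInter : ∀ s : Set (Set X), s.Finite → s ⊆ Fs → ⋂₀ s ∈ Fs := by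
        intro s hsfin
        refine Set.Finite.induction_on
          (motive := fun s _ => s ⊆ Fs → ⋂₀ s ∈ Fs) s hsfin ?_ ?_
        · intro _; rw [sInter_empty]; exact hFuniv
        · intro a s' _ _ ih hsub
          rw [sInter_insert]
          exact hFinter _ (hsub (mem_insert _ _)) _ (ih fun y hy => hsub (mem_insert_of_mem _ hy))
      have hFIP : ∀ t ⊆ Hs, t.Finite → (⋂₀ t : Set X).Nonempty := by
        intro t htH htfin
        have hF₀ : ⋂₀ (t ∩ Fs) ∈ Fs :=
          hFsInter _ (htfin.inter_of_left _) inter_subset_right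
        obtain ⟨σ, hσK, hσF⟩ := hFmem _ hF₀
        have hσUX : σ ∈ UX cp := hU.1 (hKU hσK)
        by_contra hne
        rw [not_nonempty_iff_eq_empty] at hne
        have hsub : ⋂₀ (t ∩ Fs) ⊆ ⋃₀ ((fun s => univ \ s) '' (t \ Fs)) := by
          intro x hx
          by_contra hxn
          have hxt : x ∈ ⋂₀ t := by
            intro s hs
            by_cases hsF : s ∈ Fs
            · exact hx s ⟨hs, hsF⟩
            · by_contra hxs
              exact hxn ⟨univ \ s, ⟨s, ⟨hs, hsF⟩, rfl⟩, ⟨trivial, hxs⟩⟩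
          rw [hne] at hxt
          exact hxt
        have hUn : ⋃₀ ((fun s => univ \ s) '' (t \ Fs)) ∈ σ :=
          mem_of_superset_cluster cp hσUX.1 hσF hsub
        obtain ⟨w, hw, hwσ⟩ :=
          mem_of_sUnion_mem cp hσUX hempty ((htfin.diff).image _) hUn
        obtain ⟨s, hs, rfl⟩ := hw
        rcases htH hs.1 with hsF | ⟨V, hV, rfl⟩
        · exact hs.2 hsF
        · simp only [diff_diff_cancel_left (subset_univ V)] at hwσ
          obtain ⟨G, hG, hnd⟩ := hV
          exact hnd (hσUX.1.close V hwσ G (hG σ hσK))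
      haveI hNB : (Filter.generate Hs).NeBot :=
        Filter.generate_neBot_iff.mpr hFIP
      set 𝒰 : Ultrafilter X := Ultrafilter.of (Filter.generate Hs) with h𝒰
      have hH𝒰 : ∀ s ∈ Hs, s ∈ 𝒰 :=
        fun s hs => (Ultrafilter.of_le _) (Filter.mem_generate_of_mem hs)
      set σs : Set (Set X) := {A | ∀ V ∈ (𝒰 : Filter X), deltaExt cp A V} with hσsdef
      have h𝒰σ : ∀ V ∈ (𝒰 : Filter X), V ∈ σs := by
        intro V hV W hW
        exact Or.inl (Filter.nonempty_of_mem (Filter.inter_mem hV hW))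
      have hclose : ∀ A ∈ σs, ∀ C ∈ σs, deltaExt cp A C := by
        intro A hA C hC
        by_contra hnd
        obtain ⟨E, hAE, hEC⟩ := delta_strong cp hnd
        by_cases hE : E ∈ 𝒰
        · exact hAE (hA E hE)
        · have hEc : Eᶜ ∈ 𝒰 := Ultrafilter.compl_mem_iff_notMem.mpr hE
          have h2 : deltaExt cp C Eᶜ := hC Eᶜ hEc
          rw [compl_eq_univ_diff] at h2
          exact hEC (delta_symm cp h2)
      have hmoc : ∀ C : Set X, (∀ A ∈ σs, deltaExt cp C A) → C ∈ σs :=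
        fun C h V hV => h V (h𝒰σ V hV)
      have huc : ∀ A C : Set X, A ∪ C ∈ σs → A ∈ σs ∨ C ∈ σs := by
        intro A C h
        by_contra hn
        push_neg at hn
        simp only [hσsdef, mem_setOf_eq, not_forall] at hn
        obtain ⟨⟨V₁, hV₁, hAV₁⟩, ⟨V₂, hV₂, hCV₂⟩⟩ := hn
        have hδ := h (V₁ ∩ V₂) (Filter.inter_mem hV₁ hV₂)
        rcases delta_union_left cp hδ with h' | h'
        · exact hAV₁ (delta_mono_right cp h' inter_subset_left)
        · exact hCV₂ (delta_mono_right cp h' inter_subset_right)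
      have hcluster : IsCluster cp σs := ⟨hclose, hmoc, huc⟩
      have hunb : ∀ A ∈ σs, A ∉ cp.B := by
        intro A hA hAB
        have hcompl : univ \ A ∈ Fs := by
          intro τ hτ hmem
          rw [diff_diff_cancel_left (subset_univ A)] at hmem
          exact hτ.1.2 A hmem hAB
        have hδ : deltaExt cp A (univ \ A) := hA _ (hH𝒰 _ (Or.inl hcompl))
        rcases hδ with ⟨x, hx⟩ | hb
        · exact hx.2.2 hx.1
        · exact (cp.isCP.unbounded_of_rel _ _ hb).1 hAB
      have hσsUX : σs ∈ UX cp := ⟨hcluster, hunb⟩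
      have hGσs : ∀ G : Set X, (∀ τ ∈ K, G ∈ τ) → G ∈ σs := by
        intro G hG V hV
        by_contra hnd
        have hVbad : V ∈ bad := ⟨G, hG, fun h => hnd (delta_symm cp h)⟩
        have hVc : univ \ V ∈ 𝒰 := hH𝒰 _ (Or.inr ⟨V, hVbad, rfl⟩)
        obtain ⟨x, hx⟩ := Filter.nonempty_of_mem (Filter.inter_mem hV hVc)
        exact hx.2.2 hx.1
      have hσsK : σs ∈ K := hK.2 ⟨hσsUX, hGσs⟩
      -- final contradiction
      have hnotD : σs ∉ clRel (UX cp) D := fun h => (hU.2.2 h).2 (hKU hσsK)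
      have hnot2 : ¬ ∀ G : Set X, (∀ τ ∈ D, G ∈ τ) → G ∈ σs :=
        fun h => hnotD ⟨hσsUX, h⟩
      push_neg at hnot2
      obtain ⟨G₀, hG₀abs, hG₀n⟩ := hnot2
      obtain ⟨A₀, hA₀σ, hA₀f⟩ := exists_far_of_not_mem cp hcluster hG₀n
      obtain ⟨E, hAE, hEG⟩ := delta_strong cp hA₀f
      have hEn : E ∉ σs := not_mem_of_far cp hcluster hA₀σ hAE
      have hEF : E ∈ Fs := fun τ hτ hmem =>
        hEG (hτ.1.1.close _ hmem _ (hG₀abs τ hτ))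
      exact hEn (h𝒰σ E (hH𝒰 E (Or.inl hEF)))
    obtain ⟨C, hC1, hC2⟩ := key
    refine ⟨C, ?_, intU_trace_subset cp C, ?_⟩
    · intro σ hσ
      have hσUX : σ ∈ UX cp := hK.1 hσ
      refine ⟨hσUX, fun hmem => ?_⟩
      have habs : ∀ τ ∈ UX cp \ trace cp C, univ \ C ∈ τ := by
        intro τ hτ
        have hCτ : C ∉ τ := fun hC => hτ.2 ⟨hτ.1, hC⟩
        exact compl_mem_cluster cp hτ.1 hCτ
      exact hC2 σ hσ (hmem.2 (univ \ C) habs)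
    · intro σ hσ
      by_contra hσU
      exact hC1 σ ⟨hσ.1, hσU⟩ hσ.2
end
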